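/- arXiv:2512.07024 — 2 statements merged into one kernel-verified Lean document; each statement's English description precedes it below -/
import Mathlib

section
/- Let Z ~ m be a real random variable and, for each θ, let w_θ : ℝ → ℝ be nondecreasing with increasing differences in (z,θ): for θ' > θ and z' > z, w_{θ'}(z') - w_{θ'}(z) ≥ w_θ(z') - w_θ(z). Assume also that all w_θ(Z) have finite variance. Then Var(w_{θ'}(Z)) ≥ Var(w_θ(Z)) whenever w_{θ'} - w_θ is itself nondecreasing (which is implied by the increasing-differences condition); i.e. the cross-sectional wage variance is weakly increasing in θ. -/
open MeasureTheory ProbabilityTheory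

/-- Product of two `L²` functions is integrable (via the polarization identity). -/
lemma memL2_mul_integrable {Ω : Type*} [MeasureSpace Ω]
    {A B : Ω → ℝ} (hA2 : MemLp A 2 ℙ) (hB2 : MemLp B 2 ℙ) :
    Integrable (fun ω => A ω * B ω) ℙ := by
  have key : (fun ω => A ω * B ω)
      = fun ω => ((A ω + B ω) ^ 2 - A ω ^ 2 - B ω ^ 2) / 2 := by
    funext ω; ring
  rw [key]
  exact (((hA2.add hB2).integrable_sq.sub hA2.integrable_sq).sub hB2.integrable_sq).div_const 2

/-- Chebyshev association: comonotone functions of the same random variable have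
nonnegative covariance. -/
lemma cov_nonneg_aux {Ω : Type*} [MeasureSpace Ω] [IsProbabilityMeasure (ℙ : Measure Ω)]
    (A B : Ω → ℝ) (hA2 : MemLp A 2 ℙ) (hB2 : MemLp B 2 ℙ)
    (hpt : ∀ ω ω', 0 ≤ (A ω - A ω') * (B ω - B ω')) :
    (∫ ω, A ω ∂ℙ) * (∫ ω, B ω ∂ℙ) ≤ ∫ ω, A ω * B ω ∂ℙ := by
  have hA : Integrable A ℙ := hA2.integrable one_le_two
  have hB : Integrable B ℙ := hB2.integrable one_le_two
  have hAB : Integrable (fun ω => A ω * B ω) ℙ := memL2_mul_integrable hA2 hB2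
  set μ := (ℙ : Measure Ω).prod (ℙ : Measure Ω) with hμ
  have h11 : Integrable (fun p : Ω × Ω => A p.1 * B p.1) μ := by
    have := hAB.mul_prod (ν := (ℙ : Measure Ω)) (integrable_const (1 : ℝ))
    simpa using this
  have h22 : Integrable (fun p : Ω × Ω => A p.2 * B p.2) μ := by
    have := (integrable_const (1 : ℝ)).mul_prod (μ := (ℙ : Measure Ω)) hAB
    simpa using this
  have h12 : Integrable (fun p : Ω × Ω => A p.1 * B p.2) μ := hA.mul_prod hB
  have h21 : Integrable (fun p : Ω × Ω => A p.2 * B p.1) μ := by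
    have := hB.mul_prod hA
    simpa [mul_comm] using this
  have hs1 : Integrable (fun p : Ω × Ω => A p.1 * B p.1 - A p.1 * B p.2) μ := by
    exact h11.sub h12
  have hs2 : Integrable
      (fun p : Ω × Ω => A p.1 * B p.1 - A p.1 * B p.2 - A p.2 * B p.1) μ := by
    exact hs1.sub h21
  have hnn : 0 ≤ ∫ p : Ω × Ω, (A p.1 - A p.2) * (B p.1 - B p.2) ∂μ :=
    integral_nonneg fun p => hpt p.1 p.2
  have hexp : ∀ p : Ω × Ω, (A p.1 - A p.2) * (B p.1 - B p.2)
      = A p.1 * B p.1 - A p.1 * B p.2 - A p.2 * B p.1 + A p.2 * B p.2 := by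
    intro p; ring
  have hint : ∫ p : Ω × Ω, (A p.1 - A p.2) * (B p.1 - B p.2) ∂μ
      = (∫ ω, A ω * B ω ∂ℙ) - (∫ ω, A ω ∂ℙ) * (∫ ω, B ω ∂ℙ)
        - (∫ ω, A ω ∂ℙ) * (∫ ω, B ω ∂ℙ) + (∫ ω, A ω * B ω ∂ℙ) := by
    rw [show (fun p : Ω × Ω => (A p.1 - A p.2) * (B p.1 - B p.2))
        = fun p : Ω × Ω => A p.1 * B p.1 - A p.1 * B p.2 - A p.2 * B p.1 + A p.2 * B p.2
        from funext hexp]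
    rw [integral_add hs2 h22, integral_sub hs1 h21, integral_sub h11 h12]
    have e11 : ∫ p : Ω × Ω, A p.1 * B p.1 ∂μ = ∫ ω, A ω * B ω ∂ℙ := by
      have := integral_prod_mul (μ := (ℙ : Measure Ω)) (ν := (ℙ : Measure Ω))
        (f := fun ω => A ω * B ω) (g := fun _ => (1 : ℝ))
      simpa using this
    have e22 : ∫ p : Ω × Ω, A p.2 * B p.2 ∂μ = ∫ ω, A ω * B ω ∂ℙ := by
      have := integral_prod_mul (μ := (ℙ : Measure Ω)) (ν := (ℙ : Measure Ω))
        (f := fun _ => (1 : ℝ)) (g := fun ω => A ω * B ω)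
      simpa using this
    have e12 : ∫ p : Ω × Ω, A p.1 * B p.2 ∂μ = (∫ ω, A ω ∂ℙ) * (∫ ω, B ω ∂ℙ) :=
      integral_prod_mul (f := A) (g := B)
    have e21 : ∫ p : Ω × Ω, A p.2 * B p.1 ∂μ = (∫ ω, A ω ∂ℙ) * (∫ ω, B ω ∂ℙ) := by
      have := integral_prod_mul (μ := (ℙ : Measure Ω)) (ν := (ℙ : Measure Ω))
        (f := B) (g := A)
      simpa [mul_comm] using this
    rw [e11, e22, e12, e21]
  rw [hint] at hnn
  linarith

/-- If each `w_θ` is nondecreasing, the family has increasing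
differences in `(z,θ)`, and each `w_θ(Z)` is square-integrable, then the
cross-sectional wage variance `Var(w_θ(Z))` is weakly increasing in `θ`. -/
theorem stmt9 {Ω : Type*} [MeasureSpace Ω] [IsProbabilityMeasure (ℙ : Measure Ω)]
    (Z : Ω → ℝ) (hZ : Measurable Z) (w : ℝ → ℝ → ℝ)
    (hmono : ∀ θ, Monotone (w θ))
    (hid : ∀ θ θ', θ ≤ θ' → ∀ z z', z ≤ z' →
      w θ z' - w θ z ≤ w θ' z' - w θ' z)
    (hL2 : ∀ θ, MemLp (fun ω => w θ (Z ω)) 2 ℙ) :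
    ∀ θ θ', θ ≤ θ' →
      variance (fun ω => w θ (Z ω)) ℙ ≤ variance (fun ω => w θ' (Z ω)) ℙ := by
  intro θ θ' hθ
  set F : Ω → ℝ := fun ω => w θ (Z ω) with hF
  set G : Ω → ℝ := fun ω => w θ' (Z ω) with hG
  set D : Ω → ℝ := fun ω => G ω - F ω with hD
  have hF2 : MemLp F 2 ℙ := hL2 θ
  have hG2 : MemLp G 2 ℙ := hL2 θ'
  have hD2 : MemLp D 2 ℙ := hG2.sub hF2
  -- comonotonicity of F and D pointwise in Z
  have hpt : ∀ ω ω', 0 ≤ (F ω - F ω') * (D ω - D ω') := by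
    intro ω ω'
    simp only [hD, hG, hF]
    rcases le_total (Z ω') (Z ω) with h | h
    · have h1 : w θ (Z ω') ≤ w θ (Z ω) := hmono θ h
      have h2 := hid θ θ' hθ _ _ h
      nlinarith
    · have h1 : w θ (Z ω) ≤ w θ (Z ω') := hmono θ h
      have h2 := hid θ θ' hθ _ _ h
      nlinarith
  have hcov : (∫ ω, F ω ∂ℙ) * (∫ ω, D ω ∂ℙ) ≤ ∫ ω, F ω * D ω ∂ℙ :=
    cov_nonneg_aux F D hF2 hD2 hpt
  -- integrability facts
  have hFint : Integrable F ℙ := hF2.integrable one_le_two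
  have hDint : Integrable D ℙ := hD2.integrable one_le_two
  have hFF : Integrable (fun ω => F ω ^ 2) ℙ := hF2.integrable_sq
  have hFD : Integrable (fun ω => F ω * D ω) ℙ := memL2_mul_integrable hF2 hD2
  have hDD : Integrable (fun ω => D ω ^ 2) ℙ := hD2.integrable_sq
  have hvF := variance_eq_sub (μ := (ℙ : Measure Ω)) hF2
  have hvG := variance_eq_sub (μ := (ℙ : Measure Ω)) hG2
  have hvD := variance_eq_sub (μ := (ℙ : Measure Ω)) hD2
  have hvDnn : 0 ≤ variance D ℙ := variance_nonneg _ _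
  rw [hvD] at hvDnn
  -- expand G = F + D
  have hGeq : ∀ ω, G ω = F ω + D ω := by intro ω; simp [hD]
  have hsum : Integrable (fun ω => F ω ^ 2 + 2 * (F ω * D ω)) ℙ := by
    exact hFF.add (hFD.const_mul 2)
  have hG2exp : ∫ ω, G ω ^ 2 ∂ℙ
      = ∫ ω, F ω ^ 2 ∂ℙ + 2 * ∫ ω, F ω * D ω ∂ℙ + ∫ ω, D ω ^ 2 ∂ℙ := by
    have h : (fun ω => G ω ^ 2)
        = fun ω => (F ω ^ 2 + 2 * (F ω * D ω)) + D ω ^ 2 := by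
      funext ω; rw [hGeq]; ring
    rw [h, integral_add hsum hDD, integral_add hFF (hFD.const_mul 2),
        integral_const_mul]
  have hGexp : ∫ ω, G ω ∂ℙ = ∫ ω, F ω ∂ℙ + ∫ ω, D ω ∂ℙ := by
    rw [show G = fun ω => F ω + D ω from funext hGeq]
    exact integral_add hFint hDint
  rw [hvF, hvG]
  simp only [Pi.pow_apply] at hvDnn ⊢
  rw [hG2exp, hGexp]
  nlinarith [hcov, hvDnn]
end

section
/- Let A ∈ ℝ^{K×K} be the generator of a finite-state continuous-time Markov chain (nonnegative off-diagonal entries, rows summing to zero) that is irreducible, and let Γ ∈ ℝ^K with Γ ≥ 0, Γ ≠ 0, together with a killing vector q ∈ ℝ^K, q ≥ 0, q ≠ 0. Then the balance equation (A^T - diag(q)) m + Γ = 0 has a unique solution m ∈ ℝ^K, and this solution satisfies m ≥ 0 componentwise. -/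
open Finset

lemma keyNonneg (K : ℕ) (A : Matrix (Fin K) (Fin K) ℝ)
    (hoff : ∀ i j, i ≠ j → 0 ≤ A i j)
    (hrow : ∀ i, ∑ j, A i j = 0)
    (hirr : ∀ i j : Fin K, Relation.ReflTransGen (fun a b => a ≠ b ∧ 0 < A a b) i j)
    (q : Fin K → ℝ) (hq : ∀ k, 0 ≤ q k) (hq0 : q ≠ 0)
    (m : Fin K → ℝ)
    (hm : ∀ k, 0 ≤ q k * m k - ∑ j, A j k * m j) :
    ∀ k, 0 ≤ m k := by
  by_contra h
  push_neg at h
  obtain ⟨i, hi⟩ := h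
  set S : Finset (Fin K) := Finset.univ.filter (fun k => m k < 0) with hSdef
  have hmemS : ∀ k, k ∈ S ↔ m k < 0 := by intro k; simp [hSdef]
  have hiS : i ∈ S := (hmemS i).2 hi
  -- column-sum over S
  have hswap : ∑ k ∈ S, ∑ j, A j k * m j = ∑ j, m j * ∑ k ∈ S, A j k := by
    rw [Finset.sum_comm]
    apply Finset.sum_congr rfl
    intro j _
    rw [Finset.mul_sum]
    apply Finset.sum_congr rfl
    intro k _
    ring
  -- for j ∈ S, sum over S of A j k equals minus sum over complement
  have hrowsplit : ∀ j : Fin K, ∑ k ∈ S, A j k + ∑ k ∈ Sᶜ, A j k = 0 := by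
    intro j
    rw [Finset.sum_add_sum_compl]
    exact hrow j
  have hcS : ∀ j ∈ S, ∑ k ∈ S, A j k ≤ 0 := by
    intro j hj
    have h1 : ∑ k ∈ S, A j k = - ∑ k ∈ Sᶜ, A j k := by linarith [hrowsplit j]
    have h2 : 0 ≤ ∑ k ∈ Sᶜ, A j k := by
      apply Finset.sum_nonneg
      intro k hk
      apply hoff
      intro hjk
      rw [hjk] at hj
      exact (Finset.mem_compl.mp hk) hj
    linarith
  have hcSc : ∀ j ∉ S, 0 ≤ ∑ k ∈ S, A j k := by
    intro j hj
    apply Finset.sum_nonneg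
    intro k hk
    apply hoff
    intro hjk
    rw [hjk] at hj
    exact hj hk
  have hterm : ∀ j : Fin K, 0 ≤ m j * ∑ k ∈ S, A j k := by
    intro j
    by_cases hj : j ∈ S
    · nlinarith [hcS j hj, le_of_lt ((hmemS j).1 hj)]
    · have : 0 ≤ m j := by
        by_contra hc
        exact hj ((hmemS j).2 (lt_of_not_ge hc))
      exact mul_nonneg this (hcSc j hj)
  -- summing hm over S
  have hsumS : 0 ≤ ∑ k ∈ S, (q k * m k - ∑ j, A j k * m j) :=
    Finset.sum_nonneg (fun k _ => hm k)
  rw [Finset.sum_sub_distrib, hswap] at hsumS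
  have hT2 : 0 ≤ ∑ j, m j * ∑ k ∈ S, A j k := Finset.sum_nonneg (fun j _ => hterm j)
  have hT1 : ∑ k ∈ S, q k * m k ≤ 0 := by
    apply Finset.sum_nonpos
    intro k hk
    exact mul_nonpos_of_nonneg_of_nonpos (hq k) (le_of_lt ((hmemS k).1 hk))
  have hT1eq : ∑ k ∈ S, q k * m k = 0 := le_antisymm hT1 (by linarith)
  have hT2eq : ∑ j, m j * ∑ k ∈ S, A j k = 0 := le_antisymm (by linarith) hT2
  -- each term zero
  have hqzero : ∀ k ∈ S, q k = 0 := by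
    intro k hk
    have := (Finset.sum_eq_zero_iff_of_nonpos (fun k hk =>
      mul_nonpos_of_nonneg_of_nonpos (hq k) (le_of_lt ((hmemS k).1 hk)))).mp hT1eq k hk
    have hmk := (hmemS k).1 hk
    rcases mul_eq_zero.mp this with h | h
    · exact h
    · linarith
  have hczero : ∀ j ∈ S, ∀ k ∉ S, A j k = 0 := by
    intro j hj
    have hj0 := (Finset.sum_eq_zero_iff_of_nonneg (fun j _ => hterm j)).mp hT2eq j (Finset.mem_univ j)
    have hmj := (hmemS j).1 hj
    have hcj : ∑ k ∈ S, A j k = 0 := by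
      rcases mul_eq_zero.mp hj0 with h | h
      · linarith
      · exact h
    have hcomp : ∑ k ∈ Sᶜ, A j k = 0 := by linarith [hrowsplit j]
    intro k hk
    have := (Finset.sum_eq_zero_iff_of_nonneg (fun k hk => hoff j k (by
      intro hjk; rw [hjk] at hj; exact (Finset.mem_compl.mp hk) hj))).mp hcomp k (Finset.mem_compl.mpr hk)
    exact this
  -- closure under the relation
  have hclosed : ∀ a b : Fin K, Relation.ReflTransGen (fun a b => a ≠ b ∧ 0 < A a b) a b →
      a ∈ S → b ∈ S := by
    intro a b hab
    induction hab with
    | refl => exact id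
    | tail _ hbc ih =>
      intro ha
      rename_i b' c' _
      by_contra hc
      have := hczero b' (ih ha) c' hc
      linarith [hbc.2]
  have : q = 0 := by
    funext k
    exact hqzero k (hclosed i k (hirr i k) hiS)
  exact hq0 this


/-- For an irreducible finite-state generator `A` (nonnegative
off-diagonal entries, zero row sums), a nonzero nonnegative killing vector `q`,
and a nonzero nonnegative entry vector `Γ`, the balance equation
`(Aᵀ - diag(q))m + Γ = 0` has a unique solution `m`, and it is componentwise
nonnegative. -/
theorem stmt16 (K : ℕ) (A : Matrix (Fin K) (Fin K) ℝ)
    (hoff : ∀ i j, i ≠ j → 0 ≤ A i j)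
    (hrow : ∀ i, ∑ j, A i j = 0)
    (hirr : ∀ i j : Fin K, Relation.ReflTransGen (fun a b => a ≠ b ∧ 0 < A a b) i j)
    (q Γ : Fin K → ℝ)
    (hq : ∀ k, 0 ≤ q k) (hq0 : q ≠ 0)
    (hΓ : ∀ k, 0 ≤ Γ k) (hΓ0 : Γ ≠ 0) :
    (∃! m : Fin K → ℝ, ∀ k, A.transpose.mulVec m k - q k * m k + Γ k = 0) ∧
    (∀ m : Fin K → ℝ, (∀ k, A.transpose.mulVec m k - q k * m k + Γ k = 0) →
      ∀ k, 0 ≤ m k) := by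
  have htrans : ∀ (m : Fin K → ℝ) (k : Fin K),
      A.transpose.mulVec m k = ∑ j, A j k * m j := by
    intro m k
    simp [Matrix.mulVec, dotProduct, Matrix.transpose_apply]
  set f : (Fin K → ℝ) →ₗ[ℝ] (Fin K → ℝ) :=
    (Matrix.of (fun k j => (if k = j then q k else 0) - A j k)).mulVecLin with hf
  have hfeval : ∀ (m : Fin K → ℝ) (k : Fin K),
      f m k = q k * m k - ∑ j, A j k * m j := by
    intro m k
    simp only [hf, Matrix.mulVecLin_apply, Matrix.mulVec, dotProduct,
      Matrix.of_apply, sub_mul, ite_mul, zero_mul, Finset.sum_sub_distrib,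
      Finset.sum_ite_eq, Finset.mem_univ, if_true]
  have hinj : Function.Injective f := by
    rw [injective_iff_map_eq_zero]
    intro m hm0
    have h1 : ∀ k, 0 ≤ m k := by
      apply keyNonneg K A hoff hrow hirr q hq hq0
      intro k
      have := congrFun hm0 k
      rw [hfeval] at this
      simp only [Pi.zero_apply] at this
      linarith
    have h2 : ∀ k, 0 ≤ -m k := by
      apply keyNonneg K A hoff hrow hirr q hq hq0
      intro k
      have := congrFun hm0 k
      rw [hfeval] at this
      simp only [Pi.zero_apply] at this
      have hsum : ∑ j, A j k * -m j = -∑ j, A j k * m j := by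
        rw [← Finset.sum_neg_distrib]
        apply Finset.sum_congr rfl
        intro j _
        ring
      rw [hsum]
      linarith
    funext k
    have := h2 k
    show m k = (0:ℝ)
    linarith [h1 k]
  have hsurj : Function.Surjective f := LinearMap.injective_iff_surjective.mp hinj
  obtain ⟨m₀, hm₀⟩ := hsurj Γ
  have hequiv : ∀ (m : Fin K → ℝ),
      (∀ k, A.transpose.mulVec m k - q k * m k + Γ k = 0) ↔ f m = Γ := by
    intro m
    constructor
    · intro h
      funext k
      rw [hfeval]
      have := h k
      rw [htrans] at this
      linarith
    · intro h k
      have := congrFun h k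
      rw [hfeval] at this
      rw [htrans]
      linarith
  constructor
  · refine ⟨m₀, (hequiv m₀).mpr hm₀, ?_⟩
    intro y hy
    exact hinj (((hequiv y).mp hy).trans hm₀.symm)
  · intro m hm
    apply keyNonneg K A hoff hrow hirr q hq hq0
    intro k
    have := hm k
    rw [htrans] at this
    linarith [hΓ k]
end
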